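/- arXiv:1908.10020 — 4 statements merged into one kernel-verified Lean document; each statement's English description precedes it below -/
import Mathlib

section
/- For every natural number n, the number of pairs (x, y) of natural numbers with x < 2^n, y < 2^n, and x XOR y = x + y is exactly 3^n. -/
/-!
`x ^^^ y = x + y` says that adding `x` and `y` in binary produces no carry, i.e. no bit
position holds a `1` in both. Splitting off the lowest bit, `(x, y)` is carry-free iff its
lowest bits are not both `1` and `(x / 2, y / 2)` is carry-free; so each of the `n` bit
positions independently takes one of the three values `(0, 0)`, `(0, 1)`, `(1, 0)`.
-/

open Finset

namespace Nat

theorem bit_xor_bit_eq_bit_add_bit_iff (a b : Bool) (x y : ℕ) :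
    bit a x ^^^ bit b y = bit a x + bit b y ↔ (a && b) = false ∧ x ^^^ y = x + y := by
  rw [xor_bit, bit_val, bit_val, bit_val]
  -- the case `a = b = true` is excluded because `x ^^^ y` and `x + y` have the same parity
  have hparity := xor_mod_two_eq (m := x) (n := y)
  generalize x ^^^ y = z at hparity ⊢
  cases a <;> cases b <;> simp <;> omega

end Nat

def carryFreePairs (n : ℕ) : Finset (ℕ × ℕ) :=
  (range (2 ^ n) ×ˢ range (2 ^ n)).filter (fun p => p.1 ^^^ p.2 = p.1 + p.2)

def carryFreeBits : Finset (Bool × Bool) :=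
  univ.filter (fun p => (p.1 && p.2) = false)

theorem card_carryFreeBits : #carryFreeBits = 3 := rfl

/-- `((a, b), (x, y)) ↦ (bit a x, bit b y)` -/
def bitPairEquiv : (Bool × Bool) × (ℕ × ℕ) ≃ ℕ × ℕ :=
  (Equiv.prodProdProdComm Bool Bool ℕ ℕ).trans
    (Equiv.prodCongr Equiv.boolProdNatEquivNat Equiv.boolProdNatEquivNat)

theorem card_carryFreePairs_succ (n : ℕ) :
    #(carryFreePairs (n + 1)) = 3 * #(carryFreePairs n) := by
  rw [← card_carryFreeBits, ← card_product]
  refine (card_equiv bitPairEquiv fun ⟨⟨a, b⟩, x, y⟩ => ?_).symm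
  simp only [carryFreeBits, carryFreePairs, bitPairEquiv, mem_product, mem_filter, mem_univ,
    true_and, mem_range, Equiv.trans_apply, Equiv.prodProdProdComm_apply, Equiv.prodCongr_apply,
    Prod.map_apply, Equiv.boolProdNatEquivNat_apply, Function.uncurry_apply_pair,
    Nat.bit_lt_two_pow_succ_iff, Nat.bit_xor_bit_eq_bit_add_bit_iff]
  tauto

theorem card_carryFreePairs (n : ℕ) : #(carryFreePairs n) = 3 ^ n := by
  induction n with
  | zero => rfl
  | succ n ih => rw [card_carryFreePairs_succ, ih, pow_succ']

theorem card_xor_eq_add (n : ℕ) :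
    ((Finset.range (2 ^ n) ×ˢ Finset.range (2 ^ n)).filter
      (fun p => p.1 ^^^ p.2 = p.1 + p.2)).card = 3 ^ n :=
  card_carryFreePairs n
end

section
/- For every natural number n, the number of pairs (x, y) of natural numbers with x < 2^n, y < 2^n, and (x XOR y : ℤ) = (x : ℤ) − (y : ℤ) is exactly 3^n. -/
/-!
Since `a ≤ (a ^^^ b) + b` always holds, comparing lowest bits shows that `x ^^^ y = x - y` holds
exactly when `y % 2 ≤ x % 2` and the same equation holds for `x / 2` and `y / 2`. So the solutions
are the pairs whose binary digits satisfy `yᵢ ≤ xᵢ` at every position, and each of the `n` digit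
positions admits the three choices `(0,0)`, `(1,0)`, `(1,1)`.
-/

open Finset

theorem Nat.xor_eq_two_mul_xor_div_two_add (x y : ℕ) :
    x ^^^ y = 2 * (x / 2 ^^^ y / 2) + (x + y) % 2 := by
  have hdiv : (x ^^^ y) / 2 = x / 2 ^^^ y / 2 := Nat.xor_div_two
  have hmod : (x ^^^ y) % 2 = (x + y) % 2 := Nat.xor_mod_two_eq
  omega

theorem Nat.xor_le_add (x y : ℕ) : x ^^^ y ≤ x + y := by
  induction x using Nat.strong_induction_on generalizing y with
  | _ x ih =>
    rcases Nat.eq_zero_or_pos x with rfl | hx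
    · simp
    have hhalf := ih (x / 2) (Nat.div_lt_self hx one_lt_two) (y / 2)
    have hdecomp := Nat.xor_eq_two_mul_xor_div_two_add x y
    omega

theorem Nat.le_xor_add (x y : ℕ) : x ≤ (x ^^^ y) + y :=
  calc x = (x ^^^ y) ^^^ y := by rw [Nat.xor_assoc, Nat.xor_self, Nat.xor_zero]
    _ ≤ (x ^^^ y) + y := Nat.xor_le_add _ _

theorem Nat.cast_xor_eq_sub_iff (x y : ℕ) :
    ((x ^^^ y : ℕ) : ℤ) = x - y ↔
      y % 2 ≤ x % 2 ∧ ((x / 2 ^^^ y / 2 : ℕ) : ℤ) = ↑(x / 2) - ↑(y / 2) := by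
  have hdecomp := Nat.xor_eq_two_mul_xor_div_two_add x y
  have hle := Nat.le_xor_add (x / 2) (y / 2)
  omega

section DigitwiseCount

variable (P Q : ℕ × ℕ → Prop) [DecidablePred P] [DecidablePred Q]

theorem card_filter_range_two_pow_succ
    (hP : ∀ p, P p ↔ Q (p.1 % 2, p.2 % 2) ∧ P (p.1 / 2, p.2 / 2)) (n : ℕ) :
    #{p ∈ range (2 ^ (n + 1)) ×ˢ range (2 ^ (n + 1)) | P p} =
      #{p ∈ range 2 ×ˢ range 2 | Q p} * #{p ∈ range (2 ^ n) ×ˢ range (2 ^ n) | P p} := by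
  rw [← card_product]
  refine card_nbij' (fun p => ((p.1 % 2, p.2 % 2), (p.1 / 2, p.2 / 2)))
    (fun q => (q.2.1 * 2 + q.1.1, q.2.2 * 2 + q.1.2)) ?_ ?_ ?_ ?_
  · rintro ⟨x, y⟩ hp
    simp only [mem_coe, mem_filter, mem_product, mem_range, hP (x, y), pow_succ] at hp ⊢
    obtain ⟨⟨hx, hy⟩, hQ, hP'⟩ := hp
    exact ⟨⟨⟨by omega, by omega⟩, hQ⟩, ⟨by omega, by omega⟩, hP'⟩
  · rintro ⟨⟨c, d⟩, ⟨a, b⟩⟩ hq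
    simp only [mem_coe, mem_filter, mem_product, mem_range] at hq
    obtain ⟨⟨⟨hc, hd⟩, hQ⟩, ⟨ha, hb⟩, hP'⟩ := hq
    have hmod₁ : (a * 2 + c) % 2 = c := by omega
    have hmod₂ : (b * 2 + d) % 2 = d := by omega
    have hdiv₁ : (a * 2 + c) / 2 = a := by omega
    have hdiv₂ : (b * 2 + d) / 2 = b := by omega
    simp only [mem_coe, mem_filter, mem_product, mem_range, hP (a * 2 + c, b * 2 + d),
      hmod₁, hmod₂, hdiv₁, hdiv₂, pow_succ]
    exact ⟨⟨by omega, by omega⟩, hQ, hP'⟩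
  · rintro ⟨x, y⟩ -
    simp only [Prod.mk.injEq]
    omega
  · rintro ⟨⟨c, d⟩, ⟨a, b⟩⟩ hq
    simp only [mem_coe, mem_filter, mem_product, mem_range] at hq
    simp only [Prod.mk.injEq]
    omega

theorem card_filter_range_two_pow
    (hP : ∀ p, P p ↔ Q (p.1 % 2, p.2 % 2) ∧ P (p.1 / 2, p.2 / 2)) (h0 : P (0, 0)) (n : ℕ) :
    #{p ∈ range (2 ^ n) ×ˢ range (2 ^ n) | P p} = #{p ∈ range 2 ×ˢ range 2 | Q p} ^ n := by
  induction n with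
  | zero => simp [filter_singleton, h0]
  | succ n ih => rw [card_filter_range_two_pow_succ P Q hP, ih, pow_succ']

end DigitwiseCount

theorem card_xor_eq_sub (n : ℕ) :
    ((Finset.range (2 ^ n) ×ˢ Finset.range (2 ^ n)).filter
      (fun p => ((p.1 ^^^ p.2 : ℕ) : ℤ) = (p.1 : ℤ) - (p.2 : ℤ))).card = 3 ^ n := by
  rw [card_filter_range_two_pow _ (fun q => q.2 ≤ q.1) (fun p => Nat.cast_xor_eq_sub_iff p.1 p.2)
    (by simp)]
  rfl
end

section
/- For all natural numbers x and y, (x XOR y : ℤ) = (y : ℤ) − (x : ℤ) if and only if x AND y = x (i.e., every binary digit position in which x has bit 1, y also has bit 1). -/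
/-! XOR is addition without carries, and the carries contribute `2 * (x &&& y)`; hence
`x ^^^ y = y - x` holds exactly when `2 * (x &&& y) = 2 * x`. -/

theorem Bool.toNat_bne_add_two_mul_toNat_and (b c : Bool) :
    (b != c).toNat + 2 * (b && c).toNat = b.toNat + c.toNat := by
  cases b <;> cases c <;> rfl

theorem Nat.xor_add_two_mul_and (x y : ℕ) : (x ^^^ y) + 2 * (x &&& y) = x + y := by
  induction x using Nat.binaryRec generalizing y with
  | zero => simp
  | bit b m ih =>
    cases y using Nat.binaryRec with
    | zero => simp
    | bit c n =>
      rw [Nat.xor_bit, Nat.land_bit]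
      simp only [Nat.bit_val]
      have hmn := ih n
      have hbc := Bool.toNat_bne_add_two_mul_toNat_and b c
      omega

theorem xor_eq_sub_swap_iff_and_eq_left (x y : ℕ) :
    ((x ^^^ y : ℕ) : ℤ) = (y : ℤ) - (x : ℤ) ↔ x &&& y = x := by
  have := Nat.xor_add_two_mul_and x y
  omega
end

section
/- For every natural number n, the number of pairs (x, y) with x < 2^n, y < 2^n satisfying at least one of x XOR y = x + y, (x XOR y : ℤ) = (x : ℤ) − (y : ℤ), or (x XOR y : ℤ) = (y : ℤ) − (x : ℤ) is exactly 3·3^n − 3·2^n + 1. -/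
/-!
Pairs with `x ^^^ y = x + y` are those without carries: in each bit position `(x, y)` has one
of the digits `(0, 0)`, `(1, 0)`, `(0, 1)`, so there are `3 ^ n` of them below `2 ^ n`. The
involution `(x, y) ↦ (x ^^^ y, y)` of the square exchanges this condition with
`x ^^^ y = x - y`, and swapping coordinates exchanges `x ^^^ y = x - y` with `x ^^^ y = y - x`.
Any two of the three conditions force `y = 0`, `x = 0` or `x = y`, and all three force `x = y = 0`,
so inclusion–exclusion gives `3 * 3 ^ n - 3 * 2 ^ n + 1`.
-/

open Finset

namespace Nat

theorem two_pow_mul_add_xor_two_pow_mul_add {n a b i j : ℕ} (ha : a < 2 ^ n) (hb : b < 2 ^ n) :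
    (2 ^ n * i + a) ^^^ (2 ^ n * j + b) = 2 ^ n * (i ^^^ j) + (a ^^^ b) := by
  apply eq_of_testBit_eq
  intro k
  simp only [testBit_xor, testBit_two_pow_mul_add _ ha, testBit_two_pow_mul_add _ hb,
    testBit_two_pow_mul_add _ (xor_lt_two_pow ha hb)]
  split_ifs <;> rfl

theorem two_pow_mul_add_xor_eq_add_iff {n a b i j : ℕ} (ha : a < 2 ^ n) (hb : b < 2 ^ n)
    (hi : i < 2) (hj : j < 2) :
    (2 ^ n * i + a) ^^^ (2 ^ n * j + b) = (2 ^ n * i + a) + (2 ^ n * j + b) ↔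
      i ^^^ j = i + j ∧ a ^^^ b = a + b := by
  rw [two_pow_mul_add_xor_two_pow_mul_add ha hb]
  have := xor_lt_two_pow ha hb
  interval_cases i <;> interval_cases j <;> simp <;> omega

theorem mul_add_eq_mul_add_iff {m i j a b : ℕ} (ha : a < m) (hb : b < m) :
    m * i + a = m * j + b ↔ i = j ∧ a = b := by
  refine ⟨fun h => ?_, fun ⟨hij, hab⟩ => hij ▸ hab ▸ rfl⟩
  have hm : 0 < m := by omega
  have hdiv := congrArg (· / m) h
  have hmod := congrArg (· % m) h
  simp only [mul_add_div hm, div_eq_of_lt ha, div_eq_of_lt hb, mul_add_mod, mod_eq_of_lt ha,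
    mod_eq_of_lt hb] at hdiv hmod
  exact ⟨by simpa using hdiv, hmod⟩

end Nat

theorem Finset.card_union_union_add_card_inter {α : Type*} [DecidableEq α] (s t u : Finset α) :
    #(s ∪ t ∪ u) + #(s ∩ t) + #(s ∩ u) + #(t ∩ u) = #s + #t + #u + #(s ∩ t ∩ u) := by
  have hst := card_union_add_card_inter s t
  have hstu := card_union_add_card_inter (s ∪ t) u
  have hsutu := card_union_add_card_inter (s ∩ u) (t ∩ u)
  rw [union_inter_distrib_right] at hstu
  rw [← inter_inter_distrib_right] at hsutu
  omega

def xorAddPairs (n : ℕ) : Finset (ℕ × ℕ) :=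
  (range (2 ^ n) ×ˢ range (2 ^ n)).filter fun p => p.1 ^^^ p.2 = p.1 + p.2

def xorSubPairs (n : ℕ) : Finset (ℕ × ℕ) :=
  (range (2 ^ n) ×ˢ range (2 ^ n)).filter fun p => ((p.1 ^^^ p.2 : ℕ) : ℤ) = p.1 - p.2

def xorSubSwapPairs (n : ℕ) : Finset (ℕ × ℕ) :=
  (range (2 ^ n) ×ˢ range (2 ^ n)).filter fun p => ((p.1 ^^^ p.2 : ℕ) : ℤ) = p.2 - p.1

theorem xorAddPairs_succ (n : ℕ) :
    xorAddPairs (n + 1) = (xorAddPairs 1 ×ˢ xorAddPairs n).image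
      fun q => (2 ^ n * q.1.1 + q.2.1, 2 ^ n * q.1.2 + q.2.2) := by
  have hpow : 0 < 2 ^ n := by positivity
  have hlt {i a : ℕ} (hi : i < 2) (ha : a < 2 ^ n) : 2 ^ n * i + a < 2 ^ (n + 1) := by
    have := Nat.mul_le_mul_left (2 ^ n) (Nat.le_of_lt_succ hi)
    rw [pow_succ]; omega
  have hdiv {x : ℕ} (hx : x < 2 ^ (n + 1)) : x / 2 ^ n < 2 :=
    (Nat.div_lt_iff_lt_mul hpow).2 (by rwa [← pow_succ'])
  ext ⟨x, y⟩
  simp only [xorAddPairs, mem_image, mem_product, mem_filter, mem_range, Prod.exists,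
    Prod.mk.injEq, pow_one]
  constructor
  · rintro ⟨⟨hx, hy⟩, h⟩
    have hxmod := Nat.mod_lt x hpow
    have hymod := Nat.mod_lt y hpow
    rw [← Nat.div_add_mod x (2 ^ n), ← Nat.div_add_mod y (2 ^ n),
      Nat.two_pow_mul_add_xor_eq_add_iff hxmod hymod (hdiv hx) (hdiv hy)] at h
    exact ⟨_, _, _, _, ⟨⟨⟨hdiv hx, hdiv hy⟩, h.1⟩, ⟨hxmod, hymod⟩, h.2⟩,
      Nat.div_add_mod x _, Nat.div_add_mod y _⟩
  · rintro ⟨i, j, a, b, ⟨⟨⟨hi, hj⟩, hij⟩, ⟨ha, hb⟩, hab⟩, rfl, rfl⟩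
    exact ⟨⟨hlt hi ha, hlt hj hb⟩,
      (Nat.two_pow_mul_add_xor_eq_add_iff ha hb hi hj).2 ⟨hij, hab⟩⟩

theorem card_xorAddPairs (n : ℕ) : #(xorAddPairs n) = 3 ^ n := by
  induction n with
  | zero => decide
  | succ n ih =>
    rw [xorAddPairs_succ, card_image_of_injOn, card_product, ih, pow_succ']
    · rfl
    rintro ⟨⟨i, j⟩, a, b⟩ hq ⟨⟨i', j'⟩, a', b'⟩ hq' h
    simp only [coe_product, Set.mem_prod, mem_coe, xorAddPairs, mem_filter, mem_product,
      mem_range] at hq hq'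
    simp only [Prod.mk.injEq, Nat.mul_add_eq_mul_add_iff hq.2.1.1 hq'.2.1.1,
      Nat.mul_add_eq_mul_add_iff hq.2.1.2 hq'.2.1.2] at h ⊢
    tauto

theorem card_xorSubPairs (n : ℕ) : #(xorSubPairs n) = 3 ^ n := by
  rw [← card_xorAddPairs n]
  refine card_nbij' (fun p => (p.1 ^^^ p.2, p.2)) (fun p => (p.1 ^^^ p.2, p.2)) ?_ ?_ ?_ ?_
  all_goals simp only [Set.MapsTo, Set.LeftInvOn, xorAddPairs, xorSubPairs, coe_filter,
    mem_product, mem_range, Set.mem_ofPred_eq, xor_cancel_right, and_imp, Prod.forall, Prod.mk.eta,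
    implies_true]
  all_goals exact fun a b ha hb h => ⟨⟨Nat.xor_lt_two_pow ha hb, hb⟩, by omega⟩

theorem card_xorSubSwapPairs (n : ℕ) : #(xorSubSwapPairs n) = 3 ^ n := by
  rw [← card_xorSubPairs n]
  refine card_nbij' Prod.swap Prod.swap ?_ ?_ ?_ ?_
  all_goals simp only [Set.MapsTo, Set.LeftInvOn, xorSubPairs, xorSubSwapPairs, coe_filter,
    mem_product, mem_range, Set.mem_ofPred_eq, Prod.fst_swap, Prod.snd_swap, Prod.swap_swap,
    and_imp, Prod.forall, implies_true]
  all_goals exact fun a b ha hb h => ⟨⟨hb, ha⟩, by rwa [Nat.xor_comm]⟩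

theorem xorAddPairs_inter_xorSubPairs (n : ℕ) :
    xorAddPairs n ∩ xorSubPairs n = range (2 ^ n) ×ˢ {0} := by
  ext ⟨x, y⟩
  simp only [xorAddPairs, xorSubPairs, mem_inter, mem_filter, mem_product, mem_range,
    product_singleton, mem_map, Function.Embedding.coeFn_mk, Prod.mk.injEq, ↓existsAndEq,
    true_and]
  constructor
  · rintro ⟨⟨⟨hx, -⟩, h⟩, -, h'⟩
    omega
  · rintro ⟨hx, rfl⟩
    simp [hx]

theorem xorAddPairs_inter_xorSubSwapPairs (n : ℕ) :
    xorAddPairs n ∩ xorSubSwapPairs n = {0} ×ˢ range (2 ^ n) := by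
  ext ⟨x, y⟩
  simp only [xorAddPairs, xorSubSwapPairs, mem_inter, mem_filter, mem_product, mem_range,
    singleton_product, mem_map, Function.Embedding.coeFn_mk, Prod.mk.injEq, exists_eq_right_right]
  constructor
  · rintro ⟨⟨⟨-, hy⟩, h⟩, -, h'⟩
    omega
  · rintro ⟨hy, rfl⟩
    simp [hy]

theorem xorSubPairs_inter_xorSubSwapPairs (n : ℕ) :
    xorSubPairs n ∩ xorSubSwapPairs n = (range (2 ^ n)).diag := by
  ext ⟨x, y⟩
  simp only [xorSubPairs, xorSubSwapPairs, mem_inter, mem_filter, mem_product, mem_range, mem_diag]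
  constructor
  · rintro ⟨⟨⟨hx, -⟩, h⟩, -, h'⟩
    omega
  · rintro ⟨hx, rfl⟩
    simp [hx]

theorem xorAddPairs_inter_xorSubPairs_inter_xorSubSwapPairs (n : ℕ) :
    xorAddPairs n ∩ xorSubPairs n ∩ xorSubSwapPairs n = {(0, 0)} := by
  ext ⟨x, y⟩
  simp only [xorAddPairs, xorSubPairs, xorSubSwapPairs, inter_assoc, mem_inter, mem_filter,
    mem_product, mem_range, mem_singleton, Prod.mk.injEq]
  constructor
  · rintro ⟨⟨-, h⟩, ⟨-, h'⟩, -, h''⟩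
    omega
  · rintro ⟨rfl, rfl⟩
    simp

theorem card_xor_union (n : ℕ) :
    ((Finset.range (2 ^ n) ×ˢ Finset.range (2 ^ n)).filter
      (fun p => p.1 ^^^ p.2 = p.1 + p.2 ∨
        ((p.1 ^^^ p.2 : ℕ) : ℤ) = (p.1 : ℤ) - (p.2 : ℤ) ∨
        ((p.1 ^^^ p.2 : ℕ) : ℤ) = (p.2 : ℤ) - (p.1 : ℤ))).card
      = 3 * 3 ^ n - 3 * 2 ^ n + 1 := by
  rw [filter_or, filter_or, ← union_assoc]
  change #(xorAddPairs n ∪ xorSubPairs n ∪ xorSubSwapPairs n) = _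
  have h := card_union_union_add_card_inter (xorAddPairs n) (xorSubPairs n) (xorSubSwapPairs n)
  rw [xorAddPairs_inter_xorSubPairs_inter_xorSubSwapPairs, xorAddPairs_inter_xorSubPairs,
    xorAddPairs_inter_xorSubSwapPairs, xorSubPairs_inter_xorSubSwapPairs,
    card_xorAddPairs, card_xorSubPairs, card_xorSubSwapPairs, card_product, card_product,
    diag_card, card_singleton, card_singleton, card_range] at h
  have : 2 ^ n ≤ 3 ^ n := Nat.pow_le_pow_left (by norm_num) n
  omega
end
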